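/- The type ordering has infinite strictly ascending chains: there exists a sequence of types T₀ ⊑ T₁ ⊑ T₂ ⊑ … with T_i ⊑ T_{i+1} and T_{i+1} ⋢ T_i for all i (for instance, types abstracting lists where T_k has a chain of k strong nodes followed by a weak self-loop node). -/
import Mathlib


namespace SecureClones

abbrev Var := ℕ
abbrev Field := ℕ
abbrev Loc := ℕ
abbrev PolId := ℕ
abbrev Node := ℕ

/-- Values: locations or null. -/
inductive Val where
  | loc : Loc → Val
  | null : Val
deriving DecidableEq

abbrev Obj := Field → Val
abbrev Heap := Loc → Option Obj
abbrev Env := Var → Val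

/-- An access path: a root variable followed by a sequence of fields. -/
structure Path where
  root : Var
  fields : List Field
deriving DecidableEq

/-- Evaluation of a sequence of field dereferences from a value. -/
def evalFields (h : Heap) : Val → List Field → Option Val
  | v, [] => some v
  | Val.loc l, f :: fs =>
      match h l with
      | some o => evalFields h (o f) fs
      | none => none
  | Val.null, _ :: _ => none

/-- Concrete path evaluation ⟨ρ,h⟩π ⇓ v. -/
def EvalPath (ρ : Env) (h : Heap) (π : Path) (v : Val) : Prop :=
  evalFields h (ρ π.root) π.fields = some v

/-- Reachability in a heap: `Reach h v w` iff `w` is reachable from `v`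
by a (possibly empty) sequence of field dereferences. -/
inductive Reach (h : Heap) : Val → Val → Prop
  | refl (v) : Reach h v v
  | step {v : Val} {l : Loc} {o : Obj} (f : Field) :
      Reach h v (Val.loc l) → h l = some o → Reach h v (o f)

/-- A copy policy: a set of (policy identifier, deep field) pairs. -/
abbrev Pol := Set (PolId × Field)

/-- A field sequence follows only deep fields of a policy (w.r.t. policy map `Pm`). -/
inductive FieldsSat (Pm : PolId → Pol) : Pol → List Field → Prop
  | nil (τ) : FieldsSat Pm τ []
  | cons {τ : Pol} {fs : List Field} (X : PolId) (f : Field) :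
      (X, f) ∈ τ → FieldsSat Pm (Pm X) fs → FieldsSat Pm τ (f :: fs)

/-- ⊢ π : τ : the access path follows only deep fields of τ. -/
def PathSat (Pm : PolId → Pol) (π : Path) (τ : Pol) : Prop :=
  FieldsSat Pm τ π.fields

/-- Policy semantics ρ,h,x ⊨ τ. -/
def PolSem (Pm : PolId → Pol) (ρ : Env) (h : Heap) (x : Var) (τ : Pol) : Prop :=
  ∀ (π π' : Path) (l l' : Loc),
    π.root = x → π'.root ≠ x →
    PathSat Pm π τ →
    EvalPath ρ h π (Val.loc l) → EvalPath ρ h π' (Val.loc l') →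
    l ≠ l'

/-- Base types of the type-and-effect system. -/
inductive BaseType where
  | node : Node → BaseType
  | bot
  | topOut
  | top
deriving DecidableEq

abbrev Graph := Node → Option (Field → BaseType)

/-- A type (Γ,Δ,Θ). -/
structure Ty where
  Γ : Var → BaseType
  Δ : Graph
  Θ : Set Node

/-- Abstract evaluation of a field sequence from a base type, with ⊤, ⊤out as sinks. -/
def aevalFields (Δ : Graph) : BaseType → List Field → Option BaseType
  | t, [] => some t
  | BaseType.node n, f :: fs =>
      match Δ n with
      | some e => aevalFields Δ (e f) fs
      | none => none
  | BaseType.top, _ :: _ => some BaseType.top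
  | BaseType.topOut, _ :: _ => some BaseType.topOut
  | BaseType.bot, _ :: _ => none

/-- Abstract path evaluation [Γ,Δ]π ⇓ t. -/
def AEval (Γ : Var → BaseType) (Δ : Graph) (π : Path) (t : BaseType) : Prop :=
  aevalFields Δ (Γ π.root) π.fields = some t

/-- Auxiliary type interpretation [[v : t]]. -/
inductive AuxInterp (ρ : Env) (h : Heap) (A : Set Loc) (Γ : Var → BaseType) (Δ : Graph) :
    Val → BaseType → Prop
  | null (t) : AuxInterp ρ h A Γ Δ Val.null t
  | top (v) : AuxInterp ρ h A Γ Δ v BaseType.top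
  | topOut (l : Loc) :
      (∀ l' : Loc, Reach h (Val.loc l) (Val.loc l') → l' ∉ A) →
      AuxInterp ρ h A Γ Δ (Val.loc l) BaseType.topOut
  | node (l : Loc) (n : Node) :
      l ∈ A → (Δ n).isSome →
      (∀ π, EvalPath ρ h π (Val.loc l) → AEval Γ Δ π (BaseType.node n)) →
      AuxInterp ρ h A Γ Δ (Val.loc l) (BaseType.node n)

/-- Main type interpretation ρ,h,A ⊨ (Γ,Δ,Θ). -/
structure Interp (ρ : Env) (h : Heap) (A : Set Loc) (T : Ty) : Prop where
  paths : ∀ (π : Path) (t : BaseType) (v : Val),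
    AEval T.Γ T.Δ π t → EvalPath ρ h π v → AuxInterp ρ h A T.Γ T.Δ v t
  strong : ∀ n ∈ T.Θ, ∀ (π π' : Path) (l l' : Loc),
    AEval T.Γ T.Δ π (BaseType.node n) → AEval T.Γ T.Δ π' (BaseType.node n) →
    EvalPath ρ h π (Val.loc l) → EvalPath ρ h π' (Val.loc l') → l = l'

/-- Value sub-typing t ≤_σ t' (σ : Node → Option Node, none standing for ⊤). -/
inductive VSub (σ : Node → Option Node) : BaseType → BaseType → Prop
  | bot (t) : VSub σ BaseType.bot t
  | top {t : BaseType} : (∀ n, t ≠ BaseType.node n) → VSub σ t BaseType.top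
  | topOut : VSub σ BaseType.topOut BaseType.topOut
  | node {n n' : Node} : σ n = some n' → VSub σ (BaseType.node n) (BaseType.node n')
  | nodeTop {n : Node} : σ n = none → VSub σ (BaseType.node n) BaseType.top

/-- T₁ ⊑ T₂ via the fusion map σ. -/
structure SubtypeVia (T₁ T₂ : Ty) (σ : Node → Option Node) : Prop where
  st1 : ∀ n n', (T₁.Δ n).isSome → σ n = some n' → (T₂.Δ n').isSome
  st2 : ∀ (t₁ : BaseType) (π : Path), AEval T₁.Γ T₁.Δ π t₁ →
      ∃ t₂, VSub σ t₁ t₂ ∧ AEval T₂.Γ T₂.Δ π t₂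
  st3 : ∀ n₂ ∈ T₂.Θ, ∃ n₁ ∈ T₁.Θ,
      ∀ n, ((T₁.Δ n).isSome ∧ σ n = some n₂) ↔ n = n₁

/-- The sub-typing relation T₁ ⊑ T₂. -/
def TySub (T₁ T₂ : Ty) : Prop := ∃ σ, SubtypeVia T₁ T₂ σ

-- Successor base type of a policy node for field f: the node of the policy
-- governing f if f is deep, and ⊤ otherwise.
open Classical in
noncomputable def polEdge (τ : Pol) (f : Field) : BaseType :=
  if h : ∃ X, (X, f) ∈ τ then BaseType.node (h.choose + 1) else BaseType.top

/-- The graph part of Φ(τ): node 0 is the unfolded root n_τ, node X+1 is the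
node n'_X of policy identifier X. -/
noncomputable def PhiGraph (Pm : PolId → Pol) (τ : Pol) : Graph :=
  fun n =>
    match n with
    | 0 => some (polEdge τ)
    | m + 1 => some (polEdge (Pm m))

/-- The root node n_τ of Φ(τ). -/
def PhiRoot : Node := 0

/-- Heap update h[(l,f) ↦ v]. -/
def hupd (h : Heap) (l : Loc) (f : Field) (v : Val) : Heap :=
  fun l' => if l' = l then (h l).map (fun o => Function.update o f v) else h l'

/-- Graph update Δ[(n,f) ↦ t]. -/
def gupd (Δ : Graph) (n : Node) (f : Field) (t : BaseType) : Graph :=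
  fun m => if m = n then (Δ n).map (fun e => Function.update e f t) else Δ m


/-- The type T_k over one variable 0 and one field behaviour: a chain of k
strong nodes 1,…,k followed by a weak self-loop node 0. -/
def chainTy (k : ℕ) : Ty where
  Γ := fun x =>
    if x = 0 then (if k = 0 then BaseType.node 0 else BaseType.node 1)
    else BaseType.bot
  Δ := fun n =>
    if n ≤ k then
      some (fun _ =>
        if n = 0 then BaseType.node 0
        else if n < k then BaseType.node (n + 1)
        else BaseType.node 0)
    else none
  Θ := {n | 1 ≤ n ∧ n ≤ k}

/-- Node reached in `chainTy k` after `i` field steps from the root. -/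
def chainVal (k i : ℕ) : ℕ := if i < k then i + 1 else 0

lemma chainVal_le (k i : ℕ) : chainVal k i ≤ k := by
  unfold chainVal; split <;> omega

lemma chain_aeval (k : ℕ) (fs : List Field) (i : ℕ) :
    aevalFields (chainTy k).Δ (BaseType.node (chainVal k i)) fs
      = some (BaseType.node (chainVal k (i + fs.length))) := by
  induction fs generalizing i with
  | nil => simp [aevalFields]
  | cons f fs ih =>
    have h1 : chainVal k i ≤ k := chainVal_le k i
    have hΔ : (chainTy k).Δ (chainVal k i) =
        some (fun _ =>
          if chainVal k i = 0 then BaseType.node 0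
          else if chainVal k i < k then BaseType.node (chainVal k i + 1)
          else BaseType.node 0) := by
      simp [chainTy, h1]
    have hedge : (if chainVal k i = 0 then BaseType.node 0
          else if chainVal k i < k then BaseType.node (chainVal k i + 1)
          else BaseType.node 0) = BaseType.node (chainVal k (i + 1)) := by
      by_cases h : i < k
      · by_cases h2 : i + 1 < k
        · have e : chainVal k i = i + 1 := if_pos h
          have e2 : chainVal k (i + 1) = i + 2 := if_pos h2
          rw [e, e2, if_neg (by omega), if_pos h2]
        · have e : chainVal k i = i + 1 := if_pos h
          have e2 : chainVal k (i + 1) = 0 := if_neg h2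
          rw [e, e2, if_neg (by omega), if_neg h2]
      · have e : chainVal k i = 0 := if_neg h
        have e2 : chainVal k (i + 1) = 0 := if_neg (by omega)
        rw [e, e2, if_pos rfl]
    show aevalFields (chainTy k).Δ (BaseType.node (chainVal k i)) (f :: fs) = _
    rw [show aevalFields (chainTy k).Δ (BaseType.node (chainVal k i)) (f :: fs) =
        (match (chainTy k).Δ (chainVal k i) with
          | some e => aevalFields (chainTy k).Δ (e f) fs
          | none => none) from rfl, hΔ]
    simp only [hedge, ih (i + 1)]
    have harg : i + 1 + fs.length = i + (f :: fs).length := by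
      simp only [List.length_cons]; omega
    rw [harg]

lemma chain_gamma0 (k : ℕ) : (chainTy k).Γ 0 = BaseType.node (chainVal k 0) := by
  show (if (0:ℕ) = 0 then (if k = 0 then BaseType.node 0 else BaseType.node 1)
      else BaseType.bot) = _
  rw [if_pos rfl]
  simp only [chainVal]
  by_cases hk : k = 0
  · rw [if_pos hk, if_neg (by omega)]
  · rw [if_neg hk, if_pos (by omega)]

lemma chain_aeval_root0 (k : ℕ) (fs : List Field) :
    aevalFields (chainTy k).Δ ((chainTy k).Γ 0) fs
      = some (BaseType.node (chainVal k fs.length)) := by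
  rw [chain_gamma0]
  simpa using chain_aeval k fs 0

lemma chain_delta_isSome (k n : ℕ) (h : n ≤ k) : ((chainTy k).Δ n).isSome := by
  simp [chainTy, h]

/-- The type ordering has infinite strictly ascending chains: each T_{k+1} is
strictly below T_k. -/
theorem infinite_ascending_chain :
    ∀ k : ℕ, TySub (chainTy (k + 1)) (chainTy k) ∧ ¬ TySub (chainTy k) (chainTy (k + 1)) := by
  intro k
  constructor
  · -- T_{k+1} ⊑ T_k via σ n = some (if n ≤ k then n else 0)
    refine ⟨fun n => some (if n ≤ k then n else 0), ?_, ?_, ?_⟩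
    · intro n n' _ hσ
      have : n' ≤ k := by
        rcases Option.some.inj hσ with rfl
        split
        · assumption
        · exact Nat.zero_le k
      exact chain_delta_isSome k n' this
    · intro t₁ π h₁
      by_cases hr : π.root = 0
      · have h₁' : aevalFields (chainTy (k+1)).Δ ((chainTy (k+1)).Γ 0) π.fields = some t₁ := by
          rw [← hr]; exact h₁
        rw [chain_aeval_root0] at h₁'
        have ht₁ : t₁ = BaseType.node (chainVal (k+1) π.fields.length) :=
          (Option.some.inj h₁').symm
        refine ⟨BaseType.node (chainVal k π.fields.length), ?_, ?_⟩
        · rw [ht₁]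
          have hth : (if chainVal (k+1) π.fields.length ≤ k
                then chainVal (k+1) π.fields.length else 0)
              = chainVal k π.fields.length := by
            set L := π.fields.length with hL
            by_cases h : L < k
            · have e1 : chainVal (k+1) L = L + 1 := if_pos (by omega)
              have e2 : chainVal k L = L + 1 := if_pos h
              rw [e1, e2, if_pos (by omega)]
            · by_cases h2 : L < k + 1
              · have e1 : chainVal (k+1) L = L + 1 := if_pos h2
                have e2 : chainVal k L = 0 := if_neg h
                rw [e1, e2, if_neg (by omega)]
              · have e1 : chainVal (k+1) L = 0 := if_neg h2
                have e2 : chainVal k L = 0 := if_neg h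
                rw [e1, e2, if_pos (by omega)]
          exact VSub.node (congrArg some hth)
        · show aevalFields _ _ _ = _
          rw [hr]
          exact chain_aeval_root0 k π.fields
      · have hΓ : (chainTy (k+1)).Γ π.root = BaseType.bot := by
          simp [chainTy, hr]
        have hΓ' : (chainTy k).Γ π.root = BaseType.bot := by
          simp [chainTy, hr]
        rw [AEval, hΓ] at h₁
        have hfs : π.fields = [] ∧ t₁ = BaseType.bot := by
          cases hfs : π.fields with
          | nil => rw [hfs] at h₁; exact ⟨rfl, (Option.some.inj h₁).symm⟩
          | cons f fs => rw [hfs] at h₁; simp [aevalFields] at h₁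
        refine ⟨BaseType.bot, by rw [hfs.2]; exact VSub.bot _, ?_⟩
        show aevalFields _ _ _ = _
        rw [hΓ', hfs.1]
        rfl
    · intro n₂ hn₂
      obtain ⟨ha, hb⟩ : 1 ≤ n₂ ∧ n₂ ≤ k := hn₂
      refine ⟨n₂, ⟨ha, hb.trans (Nat.le_succ k)⟩, fun n => ?_⟩
      constructor
      · rintro ⟨hΔ, hσ⟩
        have h := Option.some.inj hσ
        by_cases hn : n ≤ k
        · rw [if_pos hn] at h; exact h
        · rw [if_neg hn] at h
          exact absurd h (fun h0 => Nat.pos_iff_ne_zero.mp ha h0.symm)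
      · intro h
        rw [h]
        exact ⟨chain_delta_isSome (k+1) n₂ (hb.trans (Nat.le_succ k)),
          by rw [if_pos hb]⟩
  · -- ¬ T_k ⊑ T_{k+1}: pigeonhole on strong nodes
    rintro ⟨σ, hσ⟩
    have key : ∀ n₂ : ℕ, ∃ n₁, n₂ ∈ Finset.Icc 1 (k+1) →
        n₁ ∈ Finset.Icc 1 k ∧ σ n₁ = some n₂ := by
      intro n₂
      by_cases hn₂ : n₂ ∈ Finset.Icc 1 (k+1)
      · rw [Finset.mem_Icc] at hn₂
        obtain ⟨n₁, hn₁Θ, hiff⟩ := hσ.st3 n₂ (show 1 ≤ n₂ ∧ n₂ ≤ k + 1 from hn₂)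
        obtain ⟨h1, h2⟩ : 1 ≤ n₁ ∧ n₁ ≤ k := hn₁Θ
        exact ⟨n₁, fun _ => ⟨Finset.mem_Icc.mpr ⟨h1, h2⟩, ((hiff n₁).mpr rfl).2⟩⟩
      · exact ⟨0, fun h => absurd h hn₂⟩
    choose g hg using key
    have hinj : Set.InjOn g ((Finset.Icc 1 (k+1) : Finset ℕ) : Set ℕ) := by
      intro a ha b hb hab
      have h1 := (hg a (by simpa using ha)).2
      have h2 := (hg b (by simpa using hb)).2
      rw [hab, h2] at h1
      exact (Option.some.inj h1).symm
    have hcard := Finset.card_le_card_of_injOn g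
      (fun a ha => (hg a ha).1) hinj
    simp [Nat.card_Icc] at hcard

end SecureClones
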